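/- Let t ∈ ℂ∖{0,1} and let Y(z) = (y₁(z), y₂(z))ᵀ be a holomorphic solution on a simply connected domain Ω ⊆ ℂ∖{0,1,t} of dY/dz = (A₀/z + A₁/(z−1) + A_t/(z−t))Y, where A₀, A₁, A_t ∈ ℂ^{2×2}. Then the ℂ⁶-valued function U(z) = (z^{-1}y₁(z), z^{-1}y₂(z), (z−1)^{-1}y₁(z), (z−1)^{-1}y₂(z), (z−t)^{-1}y₁(z), (z−t)^{-1}y₂(z))ᵀ satisfies dU/dz = (B₀/z + B₁/(z−1) + B_t/(z−t))U, where B₀, B₁, B_t are the convolution matrices with parameter ν = −1. -/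

import Mathlib

/-!
Write `U_k = (z - a_k)⁻¹ Y` for the poles `a = (0, 1, t)`. Since `Y' = ∑ⱼ (z - a_j)⁻¹ A_j Y`,
`U_k' = (z - a_k)⁻¹ (Y' - U_k) = (z - a_k)⁻¹ (∑ⱼ A_j U_j - U_k)`,
which is the `k`-th block row of `∑ₖ (z - a_k)⁻¹ B_k U` for `ν = -1`.
-/

/-- The Dettweiler–Reiter convolution matrix `B_k` (`k = 0, 1, 2` corresponding to the
singular points `0, 1, t`): the `k`-th block row is `(A₀ + δ_{k0}ν, A₁ + δ_{k1}ν, A_t + δ_{k2}ν)`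
and all other block rows vanish. Indices `Fin 3 × Fin 2` encode the `6 = 3 × 2` coordinates. -/
noncomputable def convMat (A₀ A₁ At : Matrix (Fin 2) (Fin 2) ℂ) (ν : ℂ) (k : Fin 3) :
    Matrix (Fin 3 × Fin 2) (Fin 3 × Fin 2) ℂ :=
  Matrix.of fun p q =>
    if p.1 = k then
      ((if q.1 = 0 then A₀ else if q.1 = 1 then A₁ else At) +
        (if q.1 = k then ν • (1 : Matrix (Fin 2) (Fin 2) ℂ) else 0)) p.2 q.2
    else 0

open Matrix

section Convolution

variable {𝕜 ι m : Type*} [DecidableEq ι] [DecidableEq m]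

def convolutionMatrix [Ring 𝕜] (A : ι → Matrix m m 𝕜) (ν : 𝕜) (k : ι) :
    Matrix (ι × m) (ι × m) 𝕜 :=
  of fun p q => if p.1 = k then (A q.1 + if q.1 = k then ν • (1 : Matrix m m 𝕜) else 0) p.2 q.2
    else 0

theorem convolutionMatrix_apply [Ring 𝕜] (A : ι → Matrix m m 𝕜) (ν : 𝕜) (k : ι) (p q : ι × m) :
    convolutionMatrix A ν k p q =
      if p.1 = k then A q.1 p.2 q.2 + if q.1 = k then ν * (1 : Matrix m m 𝕜) p.2 q.2 else 0
      else 0 := by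
  unfold convolutionMatrix
  split_ifs <;> simp [*]

variable [Fintype ι] [Fintype m]

theorem convolutionMatrix_mulVec_apply [CommRing 𝕜] (A : ι → Matrix m m 𝕜) (ν : 𝕜) (k : ι)
    (u : ι × m → 𝕜) (p : ι × m) :
    (convolutionMatrix A ν k *ᵥ u) p =
      if p.1 = k then (∑ j, A j *ᵥ Function.curry u j) p.2 + ν * u p else 0 := by
  split_ifs with hk
  · subst hk
    simp [convolutionMatrix_apply, mulVec, dotProduct, Fintype.sum_prod_type, add_mul,
      Finset.sum_add_distrib, ite_mul, Matrix.one_apply, Finset.sum_apply]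
  · simp [convolutionMatrix_apply, mulVec, dotProduct, hk]

theorem sum_smul_convolutionMatrix_mulVec_apply [CommRing 𝕜] (A : ι → Matrix m m 𝕜) (ν : 𝕜)
    (c : ι → 𝕜) (u : ι × m → 𝕜) (p : ι × m) :
    ((∑ k, c k • convolutionMatrix A ν k) *ᵥ u) p =
      c p.1 * ((∑ j, A j *ᵥ Function.curry u j) p.2 + ν * u p) := by
  simp [sum_mulVec, smul_mulVec, Finset.sum_apply, convolutionMatrix_mulVec_apply]

end Convolution

theorem HasDerivAt.inv_sub_mul {𝕜 : Type*} [NontriviallyNormedField 𝕜] {f : 𝕜 → 𝕜} {f' a z : 𝕜}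
    (hf : HasDerivAt f f' z) (hz : z ≠ a) :
    HasDerivAt (fun w => (w - a)⁻¹ * f w) ((z - a)⁻¹ * (f' - (z - a)⁻¹ * f z)) z := by
  have hinv : HasDerivAt (fun w => (w - a)⁻¹) (-1 / (z - a) ^ 2) z := by
    simpa using ((hasDerivAt_id z).sub_const a).fun_inv (sub_ne_zero.2 hz)
  refine (hinv.mul hf).congr_deriv ?_
  field_simp
  ring

theorem hasDerivAt_convolution_of_fuchsian {𝕜 ι m : Type*} [NontriviallyNormedField 𝕜]
    [Fintype ι] [DecidableEq ι] [Fintype m] [DecidableEq m]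
    {a : ι → 𝕜} {A : ι → Matrix m m 𝕜} {Y : 𝕜 → m → 𝕜} {z : 𝕜} (hz : ∀ j, z ≠ a j)
    (hY : HasDerivAt Y ((∑ j, (z - a j)⁻¹ • A j) *ᵥ Y z) z) :
    HasDerivAt (fun w p => (w - a p.1)⁻¹ * Y w p.2)
      ((∑ k, (z - a k)⁻¹ • convolutionMatrix A (-1) k) *ᵥ fun p => (z - a p.1)⁻¹ * Y z p.2) z := by
  refine hasDerivAt_pi.2 fun p => ((hasDerivAt_pi.1 hY p.2).inv_sub_mul (hz p.1)).congr_deriv ?_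
  have hblock : ∀ j, Function.curry (fun p : ι × m => (z - a p.1)⁻¹ * Y z p.2) j =
      (z - a j)⁻¹ • Y z := fun j => rfl
  simp only [sum_smul_convolutionMatrix_mulVec_apply, hblock, mulVec_smul, sum_mulVec,
    smul_mulVec, Finset.sum_apply, Pi.smul_apply, smul_eq_mul]
  ring

theorem convMat_eq_convolutionMatrix (A₀ A₁ At : Matrix (Fin 2) (Fin 2) ℂ) (ν : ℂ) (k : Fin 3) :
    convMat A₀ A₁ At ν k = convolutionMatrix ![A₀, A₁, At] ν k := by
  ext ⟨i, r⟩ ⟨j, s⟩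
  fin_cases j <;> rfl

theorem stmt6_general (t : ℂ)
    (A₀ A₁ At : Matrix (Fin 2) (Fin 2) ℂ)
    (Ω : Set ℂ)
    (hΩ' : ∀ z ∈ Ω, z ≠ 0 ∧ z ≠ 1 ∧ z ≠ t)
    (Y : ℂ → Fin 2 → ℂ)
    (hY : ∀ z ∈ Ω, HasDerivAt Y
      ((z⁻¹ • A₀ + (z - 1)⁻¹ • A₁ + (z - t)⁻¹ • At).mulVec (Y z)) z) :
    ∀ z ∈ Ω, HasDerivAt
      (fun w => fun p : Fin 3 × Fin 2 =>
        (if p.1 = 0 then w⁻¹ else if p.1 = 1 then (w - 1)⁻¹ else (w - t)⁻¹) * Y w p.2)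
      ((z⁻¹ • convMat A₀ A₁ At (-1) 0 + (z - 1)⁻¹ • convMat A₀ A₁ At (-1) 1 +
          (z - t)⁻¹ • convMat A₀ A₁ At (-1) 2).mulVec
        (fun p : Fin 3 × Fin 2 =>
          (if p.1 = 0 then z⁻¹ else if p.1 = 1 then (z - 1)⁻¹ else (z - t)⁻¹) * Y z p.2)) z := by
  intro z hz
  have hpoles : ∀ j, z ≠ ![0, 1, t] j := by
    obtain ⟨h0, h1, ht⟩ := hΩ' z hz
    intro j
    fin_cases j <;> assumption
  have hweight : ∀ (w : ℂ) (k : Fin 3),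
      (if k = 0 then w⁻¹ else if k = 1 then (w - 1)⁻¹ else (w - t)⁻¹) = (w - ![0, 1, t] k)⁻¹ := by
    intro w k
    fin_cases k <;> simp
  simp only [hweight, convMat_eq_convolutionMatrix]
  simpa [Fin.sum_univ_three] using
    hasDerivAt_convolution_of_fuchsian (A := ![A₀, A₁, At]) hpoles
      (by simpa [Fin.sum_univ_three] using hY z hz)

/-- Dettweiler–Reiter, Lemma 6.4: if `Y = (y₁, y₂)ᵀ` solves the Fuchsian
system on a simply connected domain `Ω ⊆ ℂ ∖ {0,1,t}`, then
`U(z) = (z⁻¹Y(z), (z-1)⁻¹Y(z), (z-t)⁻¹Y(z))ᵀ` solves the convoluted system with `ν = -1`. -/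
theorem stmt6 (t : ℂ) (ht0 : t ≠ 0) (ht1 : t ≠ 1)
    (A₀ A₁ At : Matrix (Fin 2) (Fin 2) ℂ)
    (Ω : Set ℂ) (hΩ : IsOpen Ω) (hsc : SimplyConnectedSpace Ω)
    (hΩ' : ∀ z ∈ Ω, z ≠ 0 ∧ z ≠ 1 ∧ z ≠ t)
    (Y : ℂ → Fin 2 → ℂ)
    (hY : ∀ z ∈ Ω, HasDerivAt Y
      ((z⁻¹ • A₀ + (z - 1)⁻¹ • A₁ + (z - t)⁻¹ • At).mulVec (Y z)) z) :
    ∀ z ∈ Ω, HasDerivAt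
      (fun w => fun p : Fin 3 × Fin 2 =>
        (if p.1 = 0 then w⁻¹ else if p.1 = 1 then (w - 1)⁻¹ else (w - t)⁻¹) * Y w p.2)
      ((z⁻¹ • convMat A₀ A₁ At (-1) 0 + (z - 1)⁻¹ • convMat A₀ A₁ At (-1) 1 +
          (z - t)⁻¹ • convMat A₀ A₁ At (-1) 2).mulVec
        (fun p : Fin 3 × Fin 2 =>
          (if p.1 = 0 then z⁻¹ else if p.1 = 1 then (z - 1)⁻¹ else (z - t)⁻¹) * Y z p.2)) z :=
  stmt6_general t A₀ A₁ At Ω hΩ' Y hY
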